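/- Let μ ∈ 𝕋₀, (j,k) ∈ ℤ₂×ℤ₄, α := C^{j,k}(μ), M := max αᵢ, S := Σαᵢ, m := min αᵢ. Then Σᵢμᵢ − 1 = max(2M, S + 1 − (1 + (−1)^S)(m + ½)). -/

import Mathlib

/-- The class `𝕋₀`: `μ₀+1 ≡ μ₁ ≡ μ₂ ≡ μ₃ (mod 2)`. -/
def T0 (μ : Fin 4 → ℕ) : Prop :=
  (μ 0 + 1) % 2 = μ 1 % 2 ∧ μ 1 % 2 = μ 2 % 2 ∧ μ 2 % 2 = μ 3 % 2

/-- `g_μ := ½(Σᵢμᵢ − 1)`. -/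
def gmu (μ : Fin 4 → ℕ) : ℤ := ((∑ i, (μ i : ℤ)) - 1) / 2

/-- `C^{0,0}(μ)`: `α₀ = g_μ`, `α_j = ½(|2(g_μ − μ₀ − μ_j) + 1| − 1)` for `j ≠ 0`. -/
def C00 (μ : Fin 4 → ℕ) : Fin 4 → ℤ := fun i =>
  if i = 0 then gmu μ
  else (|2 * (gmu μ - (μ 0 : ℤ) - (μ i : ℤ)) + 1| - 1) / 2

/-- `C^{1,0}(μ)`: `αᵢ = ½(|2(g_μ − μᵢ) + 1| − 1)`. -/
def C10 (μ : Fin 4 → ℕ) : Fin 4 → ℤ :=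
  fun i => (|2 * (gmu μ - (μ i : ℤ)) + 1| - 1) / 2

/-- `C^{j,k}(μ)ᵢ := C^{j,0}(μ)_{i+k}`. -/
def Cjk (j : Fin 2) (k : Fin 4) (μ : Fin 4 → ℕ) : Fin 4 → ℤ :=
  fun i => (if j = 0 then C00 μ else C10 μ) (i + k)

lemma sum_shift (f : Fin 4 → ℤ) (k : Fin 4) : ∑ i, f (i + k) = ∑ i, f i :=
  Fintype.sum_equiv (Equiv.addRight k) _ _ (fun _ => rfl)

lemma sup'_shift (f : Fin 4 → ℤ) (k : Fin 4) :
    Finset.univ.sup' ⟨0, Finset.mem_univ 0⟩ (fun i => f (i + k)) =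
      Finset.univ.sup' ⟨0, Finset.mem_univ 0⟩ f := by
  apply le_antisymm
  · exact Finset.sup'_le _ _ fun i _ => Finset.le_sup' f (Finset.mem_univ (i + k))
  · refine Finset.sup'_le _ _ fun i _ => ?_
    have := Finset.le_sup' (fun i => f (i + k)) (Finset.mem_univ (i - k))
    simpa using this

lemma inf'_shift (f : Fin 4 → ℤ) (k : Fin 4) :
    Finset.univ.inf' ⟨0, Finset.mem_univ 0⟩ (fun i => f (i + k)) =
      Finset.univ.inf' ⟨0, Finset.mem_univ 0⟩ f := by
  apply le_antisymm
  · refine Finset.le_inf' _ _ fun i _ => ?_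
    have := Finset.inf'_le (fun i => f (i + k)) (Finset.mem_univ (i - k))
    simpa using this
  · exact Finset.le_inf' _ _ fun i _ => Finset.inf'_le f (Finset.mem_univ (i + k))

lemma sup4 (f : Fin 4 → ℤ) :
    Finset.univ.sup' ⟨0, Finset.mem_univ 0⟩ f = max (max (max (f 0) (f 1)) (f 2)) (f 3) := by
  show Finset.sup' ({0,1,2,3} : Finset (Fin 4)) _ f = _
  simp [Finset.sup'_insert, max_assoc]

lemma inf4 (f : Fin 4 → ℤ) :
    Finset.univ.inf' ⟨0, Finset.mem_univ 0⟩ f = min (min (min (f 0) (f 1)) (f 2)) (f 3) := by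
  show Finset.inf' ({0,1,2,3} : Finset (Fin 4)) _ f = _
  simp [Finset.inf'_insert, min_assoc]

lemma habs (a : ℤ) : (|2 * a + 1| - 1) / 2 = max a (-a - 1) := by
  rcases abs_cases (2 * a + 1) with ⟨h, h'⟩ | ⟨h, h'⟩ <;> rw [h] <;> omega

set_option maxHeartbeats 1000000 in
lemma core0 (a b c d g M S m : ℤ) (ha : 0 ≤ a) (hb : 0 ≤ b) (hc : 0 ≤ c) (hd : 0 ≤ d)
    (hg : a + b + c + d = 2 * g + 1)
    (hM : M = max (max (max g (max (g-a-b) (-(g-a-b)-1))) (max (g-a-c) (-(g-a-c)-1))) (max (g-a-d) (-(g-a-d)-1)))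
    (hm : m = min (min (min g (max (g-a-b) (-(g-a-b)-1))) (max (g-a-c) (-(g-a-c)-1))) (max (g-a-d) (-(g-a-d)-1)))
    (hS : S = g + max (g-a-b) (-(g-a-b)-1) + max (g-a-c) (-(g-a-c)-1) + max (g-a-d) (-(g-a-d)-1)) :
    (S % 2 = 0 → a + b + c + d - 1 = max (2*M) (S - 2*m)) ∧
    (S % 2 ≠ 0 → a + b + c + d - 1 = max (2*M) (S + 1)) := by
  rcases le_total (-(g-a-b)-1) (g-a-b) with h|h <;>
  rcases le_total (-(g-a-c)-1) (g-a-c) with h'|h' <;>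
  rcases le_total (-(g-a-d)-1) (g-a-d) with h''|h'' <;>
  · first | rw [max_eq_left h] at hM hm hS | rw [max_eq_right h] at hM hm hS
    first | rw [max_eq_left h'] at hM hm hS | rw [max_eq_right h'] at hM hm hS
    first | rw [max_eq_left h''] at hM hm hS | rw [max_eq_right h''] at hM hm hS
    have e1 : M = g := by omega
    have e3 : S % 2 ≠ 0 → S + 1 ≤ 2*g := by clear hM hm e1; omega
    have e2 : S % 2 = 0 → S - 2*m ≤ 2*g := by clear hM e1 e3; omega
    clear hM hm hS
    constructor <;> intro hp <;> omega

set_option maxHeartbeats 1000000 in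
lemma core1 (a b c d g M S m : ℤ) (ha : 0 ≤ a) (hb : 0 ≤ b) (hc : 0 ≤ c) (hd : 0 ≤ d)
    (hg : a + b + c + d = 2 * g + 1)
    (hM : M = max (max (max (max (g-a) (-(g-a)-1)) (max (g-b) (-(g-b)-1))) (max (g-c) (-(g-c)-1))) (max (g-d) (-(g-d)-1)))
    (hm : m = min (min (min (max (g-a) (-(g-a)-1)) (max (g-b) (-(g-b)-1))) (max (g-c) (-(g-c)-1))) (max (g-d) (-(g-d)-1)))
    (hS : S = max (g-a) (-(g-a)-1) + max (g-b) (-(g-b)-1) + max (g-c) (-(g-c)-1) + max (g-d) (-(g-d)-1)) :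
    (S % 2 = 0 → a + b + c + d - 1 = max (2*M) (S - 2*m)) ∧
    (S % 2 ≠ 0 → a + b + c + d - 1 = max (2*M) (S + 1)) := by
  rcases le_total (-(g-a)-1) (g-a) with h|h <;>
  rcases le_total (-(g-b)-1) (g-b) with h'|h' <;>
  rcases le_total (-(g-c)-1) (g-c) with h''|h'' <;>
  rcases le_total (-(g-d)-1) (g-d) with h'''|h''' <;>
  · first | rw [max_eq_left h] at hM hm hS | rw [max_eq_right h] at hM hm hS
    first | rw [max_eq_left h'] at hM hm hS | rw [max_eq_right h'] at hM hm hS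
    first | rw [max_eq_left h''] at hM hm hS | rw [max_eq_right h''] at hM hm hS
    first | rw [max_eq_left h'''] at hM hm hS | rw [max_eq_right h'''] at hM hm hS
    have e1 : M ≤ g := by omega
    have e3 : S % 2 ≠ 0 → S + 1 = 2*g := by clear hM hm e1; omega
    have e2 : S % 2 = 0 → S - 2*m = 2*g := by clear hM e1 e3; omega
    clear hM hm hS
    constructor <;> intro hp <;> omega

set_option maxHeartbeats 1000000 in
/-- Let `μ ∈ 𝕋₀`, `(j,k) ∈ ℤ₂×ℤ₄`, `α := C^{j,k}(μ)`, `M := max αᵢ`,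
`S := Σαᵢ`, `m := min αᵢ`. Then
`Σᵢμᵢ − 1 = max(2M, S + 1 − (1 + (−1)^S)(m + ½))`. -/
theorem stmt_13 (μ : Fin 4 → ℕ) (hμ : T0 μ) (j : Fin 2) (k : Fin 4)
    (M S m : ℤ)
    (hM : M = Finset.univ.sup' ⟨0, Finset.mem_univ 0⟩ (Cjk j k μ))
    (hm : m = Finset.univ.inf' ⟨0, Finset.mem_univ 0⟩ (Cjk j k μ))
    (hS : S = ∑ i, Cjk j k μ i) :
    ((∑ i, (μ i : ℚ)) - 1) =
      max (2 * (M : ℚ))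
        ((S : ℚ) + 1 - (1 + (-1 : ℚ) ^ S) * ((m : ℚ) + 1 / 2)) := by
  obtain ⟨h1, h2, h3⟩ := hμ
  have hg : (μ 0 : ℤ) + μ 1 + μ 2 + μ 3 = 2 * gmu μ + 1 := by
    have : gmu μ = ((μ 0 : ℤ) + μ 1 + μ 2 + μ 3 - 1) / 2 := by
      rw [gmu, Fin.sum_univ_four]
    omega
  simp only [Cjk] at hM hm hS
  unfold Cjk at hM hm
  have key : (S % 2 = 0 → (μ 0 : ℤ) + μ 1 + μ 2 + μ 3 - 1 = max (2*M) (S - 2*m)) ∧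
      (S % 2 ≠ 0 → (μ 0 : ℤ) + μ 1 + μ 2 + μ 3 - 1 = max (2*M) (S + 1)) := by
    by_cases hj : j = 0
    · simp only [if_pos hj] at hM hm hS
      rw [sup'_shift] at hM; rw [inf'_shift] at hm; rw [sum_shift] at hS
      rw [sup4] at hM; rw [inf4] at hm; rw [Fin.sum_univ_four] at hS
      simp only [C00, habs, show ((0:Fin 4) = 0) = True from by simp,
        show ((1:Fin 4) = 0) = False from by simp, show ((2:Fin 4) = 0) = False from by simp,
        show ((3:Fin 4) = 0) = False from by simp, if_true, if_false, ite_true,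
        ite_false] at hM hm hS
      exact core0 (μ 0) (μ 1) (μ 2) (μ 3) (gmu μ) M S m (Int.natCast_nonneg _)
        (Int.natCast_nonneg _) (Int.natCast_nonneg _) (Int.natCast_nonneg _) hg hM hm hS
    · simp only [if_neg hj] at hM hm hS
      rw [sup'_shift] at hM; rw [inf'_shift] at hm; rw [sum_shift] at hS
      rw [sup4] at hM; rw [inf4] at hm; rw [Fin.sum_univ_four] at hS
      simp only [C10, habs] at hM hm hS
      exact core1 (μ 0) (μ 1) (μ 2) (μ 3) (gmu μ) M S m (Int.natCast_nonneg _)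
        (Int.natCast_nonneg _) (Int.natCast_nonneg _) (Int.natCast_nonneg _) hg hM hm hS
  rw [Fin.sum_univ_four]
  rcases Int.even_or_odd S with hE | hO
  · rw [Even.neg_one_zpow hE]
    have hp : S % 2 = 0 := Int.even_iff.mp hE
    rw [show (S:ℚ) + 1 - (1 + 1) * ((m:ℚ) + 1/2) = ((S - 2*m : ℤ) : ℚ) by push_cast; ring,
      show (2 * (M:ℚ)) = ((2*M : ℤ):ℚ) by push_cast; ring, ← Int.cast_max]
    exact_mod_cast key.1 hp
  · rw [Odd.neg_one_zpow hO]
    have hp : S % 2 ≠ 0 := by have := Int.odd_iff.mp hO; omega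
    rw [show (S:ℚ) + 1 - (1 + -1) * ((m:ℚ) + 1/2) = ((S + 1 : ℤ) : ℚ) by push_cast; ring,
      show (2 * (M:ℚ)) = ((2*M : ℤ):ℚ) by push_cast; ring, ← Int.cast_max]
    exact_mod_cast key.2 hp
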